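/- Lemma (causal calibration error equals classical calibration error of pseudo-outcomes). Suppose there is a map χ : 𝒢 × 𝒵 → ℝ with χ(g; Z) square-integrable such that for every measurable θ : 𝒳 → ℝ and every g ∈ 𝒢, E[∂ℓ(θ(X), g; Z) | X] = θ(X) − E[χ(g; Z) | X] P_X-almost surely. Then for every measurable θ : 𝒳 → ℝ and every g ∈ 𝒢, Cal(θ, g) = (E[(θ(X) − E[χ(g; Z) | σ(θ∘X)])²])^{1/2}; that is, the calibration error of θ under ℓ at g equals the classical L² calibration error of θ as a predictor of the pseudo-outcome χ(g; Z). -/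

import Mathlib

/-!
Conditioning on `θ(X)` is coarser than conditioning on `X`, so by the tower property the
calibration residual `E[∂ℓ | θ(X)]` is the `σ(θ(X))`-conditional expectation of the score
condition's right-hand side `θ(X) − E[χ | X]`. Since `θ(X)` is `σ(θ(X))`-measurable and
`E[E[χ | X] | θ(X)] = E[χ | θ(X)]`, this is `θ(X) − E[χ | θ(X)]`, and the two `L²` norms agree.
-/

open MeasureTheory

noncomputable section

namespace Stmt3

variable {Ω 𝒳 : Type*} [MeasurableSpace Ω] [MeasurableSpace 𝒳]

/-- `L²` calibration error of `θ` with respect to the loss derivative `dl` at nuisance `g`. -/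
def Cal {N : Type*} (μ : Measure Ω) (X : Ω → 𝒳) (dl : ℝ → N → Ω → ℝ)
    (θ : 𝒳 → ℝ) (g : N) : ℝ :=
  Real.sqrt (∫ ω, ((μ[(fun ω' => dl (θ (X ω')) g ω') |
    MeasurableSpace.comap (fun ω' => θ (X ω')) inferInstance]) ω) ^ 2 ∂μ)

section CondExp

variable {α E : Type*} [NormedAddCommGroup E] [NormedSpace ℝ E] [CompleteSpace E]
  {m₁ m₂ m₀ : MeasurableSpace α} {μ : Measure α} [IsFiniteMeasure μ] {f c h : α → E}

theorem condExp_eq_sub_condExp_of_le (hm₁₂ : m₁ ≤ m₂) (hm₂ : m₂ ≤ m₀)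
    (hh : StronglyMeasurable[m₁] h) (hf : μ[f | m₂] =ᵐ[μ] h - μ[c | m₂]) :
    μ[f | m₁] =ᵐ[μ] h - μ[c | m₁] := by
  have hh_int : Integrable h μ := by
    refine (integrable_condExp.add integrable_condExp).congr (f := μ[f | m₂] + μ[c | m₂]) ?_
    filter_upwards [hf] with ω hω
    simp only [Pi.add_apply, hω, Pi.sub_apply, sub_add_cancel]
  calc μ[f | m₁]
      _ =ᵐ[μ] μ[μ[f | m₂] | m₁] := (condExp_condExp_of_le hm₁₂ hm₂).symm
      _ =ᵐ[μ] μ[h - μ[c | m₂] | m₁] := condExp_congr_ae hf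
      _ =ᵐ[μ] μ[h | m₁] - μ[μ[c | m₂] | m₁] := condExp_sub hh_int integrable_condExp m₁
      _ =ᵐ[μ] h - μ[c | m₁] := by
        rw [condExp_of_stronglyMeasurable (hm₁₂.trans hm₂) hh hh_int]
        exact Filter.EventuallyEq.rfl.sub (condExp_condExp_of_le hm₁₂ hm₂)

end CondExp

theorem causal_cal_eq_classical_cal_of_pseudo_outcomes_general
    {N : Type*}
    (μ : Measure Ω) [IsProbabilityMeasure μ]
    (X : Ω → 𝒳) (hX : Measurable X)
    (𝒢 : Set N)
    (dl : ℝ → N → Ω → ℝ)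
    -- the pseudo-outcome map, square-integrable
    (χ : N → Ω → ℝ)
    -- linear score condition
    (hscore : ∀ (θ : 𝒳 → ℝ), Measurable θ → ∀ g ∈ 𝒢,
      μ[(fun ω => dl (θ (X ω)) g ω) | MeasurableSpace.comap X inferInstance]
        =ᵐ[μ] fun ω => θ (X ω) - (μ[χ g | MeasurableSpace.comap X inferInstance]) ω)
    -- conclusion, for every measurable estimator `θ` and every `g ∈ 𝒢`
    (θ : 𝒳 → ℝ) (hθ : Measurable θ) (g : N) (hg : g ∈ 𝒢) :
    Cal μ X dl θ g =
      Real.sqrt (∫ ω, (θ (X ω) -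
        (μ[χ g | MeasurableSpace.comap (fun ω' => θ (X ω')) inferInstance]) ω) ^ 2 ∂μ) := by
  have hθX_le : MeasurableSpace.comap (fun ω => θ (X ω)) inferInstance ≤
      MeasurableSpace.comap X inferInstance :=
    MeasurableSpace.comap_le_comap_of_eq_comp θ hθ rfl
  have hθX_meas : StronglyMeasurable[MeasurableSpace.comap (fun ω => θ (X ω)) inferInstance]
      (fun ω => θ (X ω)) :=
    (comap_measurable _).stronglyMeasurable
  have hresidual := condExp_eq_sub_condExp_of_le hθX_le hX.comap_le hθX_meas (hscore θ hθ g hg)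
  unfold Cal
  congr 1
  exact integral_congr_ae (hresidual.fun_comp (· ^ 2))

theorem causal_cal_eq_classical_cal_of_pseudo_outcomes
    {N : Type*}
    (μ : Measure Ω) [IsProbabilityMeasure μ]
    (X : Ω → 𝒳) (hX : Measurable X)
    (𝒢 : Set N)
    (dl : ℝ → N → Ω → ℝ)
    (hdl2 : ∀ (θ : 𝒳 → ℝ), Measurable θ → ∀ g ∈ 𝒢,
      MemLp (fun ω => dl (θ (X ω)) g ω) 2 μ)
    -- the pseudo-outcome map, square-integrable
    (χ : N → Ω → ℝ)
    (hχ2 : ∀ g ∈ 𝒢, MemLp (χ g) 2 μ)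
    -- linear score condition
    (hscore : ∀ (θ : 𝒳 → ℝ), Measurable θ → ∀ g ∈ 𝒢,
      μ[(fun ω => dl (θ (X ω)) g ω) | MeasurableSpace.comap X inferInstance]
        =ᵐ[μ] fun ω => θ (X ω) - (μ[χ g | MeasurableSpace.comap X inferInstance]) ω)
    -- conclusion, for every measurable estimator `θ` and every `g ∈ 𝒢`
    (θ : 𝒳 → ℝ) (hθ : Measurable θ) (g : N) (hg : g ∈ 𝒢) :
    Cal μ X dl θ g =
      Real.sqrt (∫ ω, (θ (X ω) -
        (μ[χ g | MeasurableSpace.comap (fun ω' => θ (X ω')) inferInstance]) ω) ^ 2 ∂μ) :=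
  causal_cal_eq_classical_cal_of_pseudo_outcomes_general μ X hX 𝒢 dl χ hscore θ hθ g hg

end Stmt3
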